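/- Let H have VC dimension d, and for each α ∈ {0,1} and l ∈ {0,1} let U_{S_α^l}, U_{T_α^l} be samples of size m' from D_{S_α^l}, D_{T_α^l}. Then for any δ ∈ (0,1), with probability at least 1 − δ, for every g in the symmetric hypothesis space H: Δ_{EO,T}(g) ≤ Δ_{EO,S}(g) + (1/2) Σ_{α,l ∈ {0,1}} d̂_{HΔH}(U_{T_α^l}, U_{S_α^l}) + 16√((2d log(2m') + log(2/δ))/m') + Σ_{α,l} λ_α^l, where λ_α^l = ε_{S_α^l}(g*, f) + ε_{T_α^l}(g*, f). -/

import Mathlib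

/-!
For each group and label, the triangle inequality for `ε` through `g*` gives
`|ε_T(g,f) − ε_S(g,f)| ≤ ½ d_{HΔH}(T,S) + λ`, because for binary hypotheses `ε(g,g*)` is the
mass of `{g ≠ g*}`; this bounds `Δ_{EO,T}(g) − Δ_{EO,S}(g)` by the population divergences.
On samples, `d_{HΔH} ≤ d̂_{HΔH} + 4t` can only fail if the empirical frequency of the one set
`{h ≠ h'}` nearly attaining the supremum in `d_{HΔH}` deviates by `t`, which by Hoeffding's
inequality has probability at most `2 exp(−m't²)`. With `t = 2√((2d log(2m') + log(2/δ))/m')`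
the union bound over the four pairs of domains leaves failure probability `δ⁴/2 ≤ δ`.
-/

open MeasureTheory

/-- Disagreement error `ε_D(h,h') = E_{z∼D}[|h z − h' z|]`. -/
noncomputable def errE {Z : Type*} [MeasurableSpace Z] (μ : Measure Z) (h h' : Z → ℝ) : ℝ :=
  ∫ z, |h z - h' z| ∂μ

/-- Population divergence `d_{HΔH}(D,D') = 2 sup_{h,h'∈H} |Pr_D[h≠h'] − Pr_{D'}[h≠h']|`. -/
noncomputable def dHH {Z : Type*} [MeasurableSpace Z] (H : Set (Z → ℝ))
    (μ ν : Measure Z) : ℝ :=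
  2 * ⨆ p : H × H,
    |(μ {z | p.1.1 z ≠ p.2.1 z}).toReal - (ν {z | p.1.1 z ≠ p.2.1 z}).toReal|

/-- Empirical divergence `d̂_{HΔH}(U,U')` on size-`m` samples. -/
noncomputable def dHHemp {Z : Type*} (H : Set (Z → ℝ)) {m : ℕ}
    (U U' : Fin m → Z) : ℝ :=
  2 * ⨆ p : H × H,
    |(∑ i, if p.1.1 (U i) ≠ p.2.1 (U i) then (1 : ℝ) else 0) / m -
      (∑ i, if p.1.1 (U' i) ≠ p.2.1 (U' i) then (1 : ℝ) else 0) / m|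

/-- Equalized odds distance. -/
noncomputable def eoDiff {Z : Type*} [MeasurableSpace Z]
    (μ00 μ10 μ01 μ11 : Measure Z) (g : Z → ℝ) : ℝ :=
  |(∫ z, g z ∂μ00) - ∫ z, g z ∂μ10| +
    |(∫ z, (1 - g z) ∂μ01) - ∫ z, (1 - g z) ∂μ11|

open ProbabilityTheory Real
open scoped NNReal ENNReal

namespace ProbabilityTheory.HasSubgaussianMGF

variable {Ω : Type*} [MeasurableSpace Ω] {μ : Measure Ω} {X : Ω → ℝ} {c : ℝ≥0}

lemma measureReal_le_abs_le (h : HasSubgaussianMGF X c μ) {ε : ℝ} (hε : 0 ≤ ε) :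
    μ.real {ω | ε ≤ |X ω|} ≤ 2 * exp (-ε ^ 2 / (2 * c)) := by
  have hsplit : {ω | ε ≤ |X ω|} = {ω | ε ≤ X ω} ∪ {ω | ε ≤ (-X) ω} := by
    ext ω; simp only [Set.mem_ofPred_eq, Set.mem_union, Pi.neg_apply, le_abs', le_neg, or_comm]
  calc μ.real {ω | ε ≤ |X ω|}
      ≤ μ.real {ω | ε ≤ X ω} + μ.real {ω | ε ≤ (-X) ω} := hsplit ▸ measureReal_union_le _ _
    _ ≤ exp (-ε ^ 2 / (2 * c)) + exp (-ε ^ 2 / (2 * c)) :=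
        add_le_add (h.measure_ge_le hε) (h.neg.measure_ge_le hε)
    _ = 2 * exp (-ε ^ 2 / (2 * c)) := by ring

lemma prod_sub {Ω' : Type*} [MeasurableSpace Ω'] {ν : Measure Ω'} [IsProbabilityMeasure μ]
    [IsProbabilityMeasure ν] {Y : Ω' → ℝ} {c' : ℝ≥0} (hX : HasSubgaussianMGF X c μ)
    (hY : HasSubgaussianMGF Y c' ν) :
    HasSubgaussianMGF (fun ω => X ω.1 - Y ω.2) (c + c') (μ.prod ν) := by
  refine sub_of_indepFun (.of_map measurable_fst.aemeasurable ?_)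
    (.of_map measurable_snd.aemeasurable ?_) (indepFun_prod₀ hX.aemeasurable hY.aemeasurable)
  · rwa [measurePreserving_fst.map_eq]
  · rwa [measurePreserving_snd.map_eq]

end ProbabilityTheory.HasSubgaussianMGF

lemma hasSubgaussianMGF_sum_pi {Z : Type*} [MeasurableSpace Z] {ν : Measure Z}
    [IsProbabilityMeasure ν] {φ : Z → ℝ} {a b : ℝ} (hφ : AEMeasurable φ ν)
    (hab : ∀ᵐ z ∂ν, φ z ∈ Set.Icc a b) (m : ℕ) :
    HasSubgaussianMGF (fun x : Fin m → Z => ∑ i, (φ (x i) - ν[φ]))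
      (m * (‖b - a‖₊ / 2) ^ 2) (Measure.pi fun _ => ν) := by
  have hind : iIndepFun (fun (i : Fin m) x => φ (x i) - ν[φ]) (Measure.pi fun _ => ν) :=
    iIndepFun_pi (X := fun (_ : Fin m) (z : Z) => φ z - ν[φ]) fun _ => hφ.sub_const _
  have hone : ∀ i : Fin m, HasSubgaussianMGF (fun x : Fin m → Z => φ (x i) - ν[φ])
      ((‖b - a‖₊ / 2) ^ 2) (Measure.pi fun _ => ν) := by
    intro i
    refine .of_map (Y := fun x : Fin m → Z => x i) (X := fun z => φ z - ν[φ])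
      (measurable_pi_apply i).aemeasurable ?_
    rw [(measurePreserving_eval _ i).map_eq]
    exact hasSubgaussianMGF_of_mem_Icc hφ hab
  simpa using HasSubgaussianMGF.sum_of_iIndepFun hind (s := Finset.univ) fun i _ => hone i

section EmpiricalFreq

variable {Z : Type*}

lemma indicator_one_mem_Icc (s : Set Z) (z : Z) : s.indicator (1 : Z → ℝ) z ∈ Set.Icc 0 1 := by
  by_cases hz : z ∈ s <;> simp [hz]

noncomputable def empiricalFreq {m : ℕ} (s : Set Z) (U : Fin m → Z) : ℝ :=
  (∑ i, s.indicator 1 (U i)) / m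

lemma empiricalFreq_mem_Icc {m : ℕ} (s : Set Z) (U : Fin m → Z) :
    empiricalFreq s U ∈ Set.Icc 0 1 := by
  refine ⟨div_nonneg (Finset.sum_nonneg fun i _ => (indicator_one_mem_Icc s (U i)).1)
    m.cast_nonneg, div_le_one_of_le₀ ?_ m.cast_nonneg⟩
  simpa using Finset.sum_le_sum fun i (_ : i ∈ Finset.univ) => (indicator_one_mem_Icc s (U i)).2

lemma measureReal_le_abs_empiricalFreq_sub_le [MeasurableSpace Z] {ν ν' : Measure Z}
    [IsProbabilityMeasure ν] [IsProbabilityMeasure ν'] {s : Set Z} (hs : MeasurableSet s)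
    {m : ℕ} (hm : 0 < m) {t : ℝ} (ht : 0 ≤ t) :
    ((Measure.pi fun _ : Fin m => ν).prod (Measure.pi fun _ : Fin m => ν')).real
      {p | t ≤ |(empiricalFreq s p.1 - empiricalFreq s p.2) - (ν.real s - ν'.real s)|}
      ≤ 2 * exp (-(m * t ^ 2)) := by
  have hφ : Measurable (s.indicator (1 : Z → ℝ)) := measurable_one.indicator hs
  have hsum := (hasSubgaussianMGF_sum_pi hφ.aemeasurable
    (ae_of_all ν (indicator_one_mem_Icc s)) m).prod_sub
    (hasSubgaussianMGF_sum_pi hφ.aemeasurable (ae_of_all ν' (indicator_one_mem_Icc s)) m)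
  have hm0 : (0 : ℝ) < m := Nat.cast_pos.2 hm
  have hscale : ∀ p : (Fin m → Z) × (Fin m → Z),
      (∑ i, (s.indicator 1 (p.1 i) - ν[s.indicator 1])) -
          ∑ i, (s.indicator 1 (p.2 i) - ν'[s.indicator 1]) =
        m * ((empiricalFreq s p.1 - empiricalFreq s p.2) - (ν.real s - ν'.real s)) := by
    intro p
    simp only [empiricalFreq, integral_indicator_one hs, Finset.sum_sub_distrib, Finset.sum_const,
      Finset.card_univ, Fintype.card_fin, nsmul_eq_mul]
    field_simp
    ring
  have hset : {p : (Fin m → Z) × (Fin m → Z) |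
      t ≤ |(empiricalFreq s p.1 - empiricalFreq s p.2) - (ν.real s - ν'.real s)|} =
      {p | m * t ≤ |(∑ i, (s.indicator 1 (p.1 i) - ν[s.indicator 1])) -
          ∑ i, (s.indicator 1 (p.2 i) - ν'[s.indicator 1])|} := by
    ext p
    rw [Set.mem_ofPred_eq, Set.mem_ofPred_eq, hscale, abs_mul, abs_of_pos hm0,
      mul_le_mul_iff_right₀ hm0]
  rw [hset]
  refine (hsum.measureReal_le_abs_le (by positivity)).trans_eq ?_
  congr 2
  push_cast
  field_simp
  norm_num

end EmpiricalFreq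

section Divergence

variable {Z : Type*} {H : Set (Z → ℝ)}

lemma dHHemp_eq {m : ℕ} (U U' : Fin m → Z) :
    dHHemp H U U' = 2 * ⨆ q : H × H,
      |empiricalFreq {z | q.1.1 z ≠ q.2.1 z} U - empiricalFreq {z | q.1.1 z ≠ q.2.1 z} U'| := by
  simp only [dHHemp, empiricalFreq, Set.indicator_apply, Set.mem_ofPred_eq, Pi.one_apply]

lemma bddAbove_range_abs_sub_of_mem_Icc {ι : Type*} {f g : ι → ℝ}
    (hf : ∀ i, f i ∈ Set.Icc 0 1) (hg : ∀ i, g i ∈ Set.Icc 0 1) :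
    BddAbove (Set.range fun i => |f i - g i|) :=
  ⟨1 - 0, by
    rintro _ ⟨i, rfl⟩
    exact abs_sub_le_of_le_of_le (hf i).1 (hf i).2 (hg i).1 (hg i).2⟩

variable [MeasurableSpace Z]

lemma measureReal_mem_Icc (μ : Measure Z) [IsProbabilityMeasure μ] (s : Set Z) :
    μ.real s ∈ Set.Icc 0 1 :=
  ⟨measureReal_nonneg, measureReal_le_one⟩

lemma measure_compl_dHH_le_dHHemp_add_le (hmeas : ∀ h ∈ H, Measurable h) (ν ν' : Measure Z)
    [IsProbabilityMeasure ν] [IsProbabilityMeasure ν'] {m : ℕ} (hm : 0 < m) {t : ℝ} (ht : 0 < t) :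
    ((Measure.pi fun _ : Fin m => ν).prod (Measure.pi fun _ : Fin m => ν'))
        {p | dHH H ν ν' ≤ dHHemp H p.1 p.2 + 4 * t}ᶜ
      ≤ ENNReal.ofReal (2 * exp (-(m * t ^ 2))) := by
  rcases isEmpty_or_nonempty H with hH | hH
  · simp [dHH, dHHemp, ht.le]
  set F : H × H → ℝ := fun q =>
    |ν.real {z | q.1.1 z ≠ q.2.1 z} - ν'.real {z | q.1.1 z ≠ q.2.1 z}|
  obtain ⟨q, hq⟩ := exists_lt_of_lt_ciSup (sub_lt_self (⨆ q, F q) ht)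
  set s := {z | q.1.1 z ≠ q.2.1 z}
  have hs : MeasurableSet s := (measurableSet_eq_fun (hmeas _ q.1.2) (hmeas _ q.2.2)).compl
  have hgood : ∀ p : (Fin m → Z) × (Fin m → Z),
      |(empiricalFreq s p.1 - empiricalFreq s p.2) - (ν.real s - ν'.real s)| < t →
        dHH H ν ν' ≤ dHHemp H p.1 p.2 + 4 * t := by
    intro p hp
    have hemp : |empiricalFreq s p.1 - empiricalFreq s p.2| ≤ dHHemp H p.1 p.2 / 2 := by
      rw [dHHemp_eq]
      have := le_ciSup (bddAbove_range_abs_sub_of_mem_Icc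
        (fun q : H × H => empiricalFreq_mem_Icc {z | q.1.1 z ≠ q.2.1 z} p.1)
        (fun q : H × H => empiricalFreq_mem_Icc {z | q.1.1 z ≠ q.2.1 z} p.2)) q
      linarith
    have hpop : dHH H ν ν' = 2 * ⨆ q, F q := rfl
    have htri := abs_sub_abs_le_abs_sub (ν.real s - ν'.real s)
      (empiricalFreq s p.1 - empiricalFreq s p.2)
    rw [abs_sub_comm (ν.real s - ν'.real s) (empiricalFreq s p.1 - empiricalFreq s p.2)] at htri
    have : F q = |ν.real s - ν'.real s| := rfl
    linarith
  calc _ ≤ ((Measure.pi fun _ : Fin m => ν).prod (Measure.pi fun _ : Fin m => ν'))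
        {p | t ≤ |(empiricalFreq s p.1 - empiricalFreq s p.2) - (ν.real s - ν'.real s)|} :=
        measure_mono fun p hp ↦ by exact not_lt.1 fun h ↦ hp (hgood p h)
    _ = ENNReal.ofReal (((Measure.pi fun _ : Fin m => ν).prod (Measure.pi fun _ : Fin m => ν')).real
        {p | t ≤ |(empiricalFreq s p.1 - empiricalFreq s p.2) - (ν.real s - ν'.real s)|}) :=
        (ofReal_measureReal).symm
    _ ≤ _ := ENNReal.ofReal_le_ofReal (measureReal_le_abs_empiricalFreq_sub_le hs hm ht.le)

end Divergence

section Disagreement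

variable {Z : Type*} [MeasurableSpace Z] {μ : Measure Z} {f g h : Z → ℝ}

lemma errE_comm : errE μ g h = errE μ h g := by
  simp only [errE, abs_sub_comm]

lemma errE_le_errE_add_errE (hf : Integrable f μ) (hg : Integrable g μ) (hh : Integrable h μ) :
    errE μ g f ≤ errE μ g h + errE μ h f := by
  have hgh : Integrable (fun z => |g z - h z|) μ := (hg.sub hh).abs
  have hhf : Integrable (fun z => |h z - f z|) μ := (hh.sub hf).abs
  rw [errE, errE, errE, ← integral_add hgh hhf]
  exact integral_mono (hg.sub hf).abs (hgh.add hhf) fun z => abs_sub_le _ _ _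

lemma abs_errE_sub_errE_le (hf : Integrable f μ) (hg : Integrable g μ) (hh : Integrable h μ) :
    |errE μ g f - errE μ g h| ≤ errE μ h f := by
  have h₁ := errE_le_errE_add_errE hf hg hh
  have h₂ := errE_le_errE_add_errE hh hg hf
  rw [errE_comm (g := f)] at h₂
  exact abs_sub_le_iff.2 ⟨by linarith, by linarith⟩

lemma errE_eq_measureReal_ne (hg : Measurable g) (hh : Measurable h)
    (hg01 : ∀ z, g z = 0 ∨ g z = 1) (hh01 : ∀ z, h z = 0 ∨ h z = 1) :
    errE μ g h = μ.real {z | g z ≠ h z} := by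
  have hs : MeasurableSet {z | g z ≠ h z} := (measurableSet_eq_fun hg hh).compl
  rw [← integral_indicator_one hs, errE]
  congr 1 with z
  by_cases hz : g z = h z
  · simp [hz]
  · rcases hg01 z with h1 | h1 <;> rcases hh01 z with h2 | h2 <;> simp_all

lemma integral_eq_errE_of_ae_eq_zero (hg : ∀ z, 0 ≤ g z) (hf : f =ᵐ[μ] 0) :
    ∫ z, g z ∂μ = errE μ g f :=
  integral_congr_ae <| hf.mono fun z hz => by simp [hz, abs_of_nonneg (hg z)]

lemma integral_one_sub_eq_errE_of_ae_eq_one (hg : ∀ z, g z ≤ 1) (hf : f =ᵐ[μ] 1) :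
    ∫ z, (1 - g z) ∂μ = errE μ g f :=
  integral_congr_ae <| hf.mono fun z hz => by simp [hz, abs_of_nonpos (sub_nonpos.2 (hg z))]

end Disagreement

lemma abs_sub_le_abs_sub_add_abs_sub_add_abs_sub (a b a' b' : ℝ) :
    |a - b| ≤ |a' - b'| + |a - a'| + |b - b'| :=
  calc |a - b| = |(a' - b') + (a - a') + (b' - b)| := by ring_nf
    _ ≤ |a' - b'| + |a - a'| + |b' - b| := abs_add_three _ _ _
    _ = |a' - b'| + |a - a'| + |b - b'| := by rw [abs_sub_comm b' b]

section DomainAdaptation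

variable {Z : Type*} [MeasurableSpace Z] {H : Set (Z → ℝ)}

lemma abs_measureReal_ne_sub_le_dHH (ν ν' : Measure Z) [IsProbabilityMeasure ν]
    [IsProbabilityMeasure ν'] {g h : Z → ℝ} (hg : g ∈ H) (hh : h ∈ H) :
    |ν.real {z | g z ≠ h z} - ν'.real {z | g z ≠ h z}| ≤ dHH H ν ν' / 2 := by
  have := le_ciSup (bddAbove_range_abs_sub_of_mem_Icc
    (fun q : H × H => measureReal_mem_Icc ν {z | q.1.1 z ≠ q.2.1 z})
    (fun q : H × H => measureReal_mem_Icc ν' {z | q.1.1 z ≠ q.2.1 z})) (⟨⟨g, hg⟩, ⟨h, hh⟩⟩ : H × H)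
  have hd : dHH H ν ν' = 2 * ⨆ q : H × H,
      |ν.real {z | q.1.1 z ≠ q.2.1 z} - ν'.real {z | q.1.1 z ≠ q.2.1 z}| := rfl
  linarith

lemma integrable_of_eq_zero_or_one {μ : Measure Z} [IsFiniteMeasure μ] {g : Z → ℝ}
    (hg : Measurable g) (hg01 : ∀ z, g z = 0 ∨ g z = 1) : Integrable g μ :=
  .of_mem_Icc 0 1 hg.aemeasurable <| ae_of_all _ fun z => by rcases hg01 z with h | h <;> simp [h]

lemma abs_errE_sub_errE_le_dHH (hbin : ∀ h ∈ H, ∀ z, h z = 0 ∨ h z = 1)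
    (hmeas : ∀ h ∈ H, Measurable h) {ν ν' : Measure Z} [IsProbabilityMeasure ν]
    [IsProbabilityMeasure ν'] {f : Z → ℝ} (hfν : Integrable f ν) (hfν' : Integrable f ν')
    {g gs : Z → ℝ} (hg : g ∈ H) (hgs : gs ∈ H) :
    |errE ν g f - errE ν' g f| ≤ dHH H ν ν' / 2 + (errE ν gs f + errE ν' gs f) := by
  have hgi : ∀ {μ : Measure Z} [IsProbabilityMeasure μ], Integrable g μ :=
    integrable_of_eq_zero_or_one (hmeas g hg) (hbin g hg)
  have hgsi : ∀ {μ : Measure Z} [IsProbabilityMeasure μ], Integrable gs μ :=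
    integrable_of_eq_zero_or_one (hmeas gs hgs) (hbin gs hgs)
  obtain ⟨h₁, h₁'⟩ := abs_le.1 (abs_errE_sub_errE_le hfν hgi hgsi)
  obtain ⟨h₂, h₂'⟩ := abs_le.1 (abs_errE_sub_errE_le hfν' hgi hgsi)
  have h₃ : |errE ν g gs - errE ν' g gs| ≤ dHH H ν ν' / 2 := by
    rw [errE_eq_measureReal_ne (hmeas g hg) (hmeas gs hgs) (hbin g hg) (hbin gs hgs),
      errE_eq_measureReal_ne (hmeas g hg) (hmeas gs hgs) (hbin g hg) (hbin gs hgs)]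
    exact abs_measureReal_ne_sub_le_dHH ν ν' hg hgs
  obtain ⟨h₃, h₃'⟩ := abs_le.1 h₃
  exact abs_le.2 ⟨by linarith, by linarith⟩

lemma eoDiff_eq_abs_errE_sub_add_abs_errE_sub {μ00 μ10 μ01 μ11 : Measure Z} {f g : Z → ℝ}
    (hg : ∀ z, g z ∈ Set.Icc 0 1) (h00 : f =ᵐ[μ00] 0) (h10 : f =ᵐ[μ10] 0) (h01 : f =ᵐ[μ01] 1)
    (h11 : f =ᵐ[μ11] 1) :
    eoDiff μ00 μ10 μ01 μ11 g =
      |errE μ00 g f - errE μ10 g f| + |errE μ01 g f - errE μ11 g f| := by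
  have hg0 z := (hg z).1
  have hg1 z := (hg z).2
  rw [eoDiff, integral_eq_errE_of_ae_eq_zero hg0 h00, integral_eq_errE_of_ae_eq_zero hg0 h10,
    integral_one_sub_eq_errE_of_ae_eq_one hg1 h01, integral_one_sub_eq_errE_of_ae_eq_one hg1 h11]

theorem eoDiff_le_eoDiff_add_dHH (hbin : ∀ h ∈ H, ∀ z, h z = 0 ∨ h z = 1)
    (hmeas : ∀ h ∈ H, Measurable h)
    {μS00 μS10 μS01 μS11 μT00 μT10 μT01 μT11 : Measure Z}
    [IsProbabilityMeasure μS00] [IsProbabilityMeasure μS10]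
    [IsProbabilityMeasure μS01] [IsProbabilityMeasure μS11]
    [IsProbabilityMeasure μT00] [IsProbabilityMeasure μT10]
    [IsProbabilityMeasure μT01] [IsProbabilityMeasure μT11] {f : Z → ℝ}
    (hfS00 : f =ᵐ[μS00] 0) (hfS10 : f =ᵐ[μS10] 0) (hfS01 : f =ᵐ[μS01] 1) (hfS11 : f =ᵐ[μS11] 1)
    (hfT00 : f =ᵐ[μT00] 0) (hfT10 : f =ᵐ[μT10] 0) (hfT01 : f =ᵐ[μT01] 1) (hfT11 : f =ᵐ[μT11] 1)
    {gs g : Z → ℝ} (hgs : gs ∈ H) (hg : g ∈ H) :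
    eoDiff μT00 μT10 μT01 μT11 g ≤ eoDiff μS00 μS10 μS01 μS11 g +
      (dHH H μT00 μS00 + dHH H μT10 μS10 + dHH H μT01 μS01 + dHH H μT11 μS11) / 2 +
      ((errE μS00 gs f + errE μT00 gs f) + (errE μS10 gs f + errE μT10 gs f) +
        (errE μS01 gs f + errE μT01 gs f) + (errE μS11 gs f + errE μT11 gs f)) := by
  have hg01 z : g z ∈ Set.Icc 0 1 := by rcases hbin g hg z with h | h <;> simp [h]
  rw [eoDiff_eq_abs_errE_sub_add_abs_errE_sub hg01 hfT00 hfT10 hfT01 hfT11,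
    eoDiff_eq_abs_errE_sub_add_abs_errE_sub hg01 hfS00 hfS10 hfS01 hfS11]
  have hpair {ν ν' : Measure Z} [IsProbabilityMeasure ν] [IsProbabilityMeasure ν'] {c : ℝ}
      (hν : f =ᵐ[ν] fun _ => c) (hν' : f =ᵐ[ν'] fun _ => c) :=
    abs_errE_sub_errE_le_dHH hbin hmeas ((integrable_const c).congr hν.symm)
      ((integrable_const c).congr hν'.symm) hg hgs
  have h00 := hpair hfT00 hfS00
  have h10 := hpair hfT10 hfS10
  have h01 := hpair hfT01 hfS01
  have h11 := hpair hfT11 hfS11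
  have hT0 := abs_sub_le_abs_sub_add_abs_sub_add_abs_sub (errE μT00 g f) (errE μT10 g f)
    (errE μS00 g f) (errE μS10 g f)
  have hT1 := abs_sub_le_abs_sub_add_abs_sub_add_abs_sub (errE μT01 g f) (errE μT11 g f)
    (errE μS01 g f) (errE μS11 g f)
  linarith

end DomainAdaptation

lemma MeasureTheory.Measure.prod_compl_prod_le {α β : Type*} [MeasurableSpace α]
    [MeasurableSpace β] {μ : Measure α} {ν : Measure β} [IsProbabilityMeasure μ]
    [IsProbabilityMeasure ν] (s : Set α) (t : Set β) : μ.prod ν (s ×ˢ t)ᶜ ≤ μ sᶜ + ν tᶜ := by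
  rw [Set.compl_prod_eq_union]
  refine (measure_union_le _ _).trans_eq ?_
  rw [Measure.prod_prod, Measure.prod_prod, measure_univ, measure_univ, mul_one, one_mul]

lemma ofReal_one_sub_le_of_measure_compl_le {α : Type*} [MeasurableSpace α] {μ : Measure α}
    [IsProbabilityMeasure μ] {s : Set α} {δ : ℝ} (hδ : 0 ≤ δ) (h : μ sᶜ ≤ ENNReal.ofReal δ) :
    ENNReal.ofReal (1 - δ) ≤ μ s := by
  have hs := measure_univ_le_add_compl (μ := μ) s
  rw [measure_univ] at hs
  rw [ENNReal.ofReal_sub _ hδ, ENNReal.ofReal_one, tsub_le_iff_right]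
  exact hs.trans (by gcongr)

lemma eight_mul_exp_neg_le {A δ : ℝ} (hA : 0 ≤ A) (hδ : 0 < δ) (hδ1 : δ < 1) :
    8 * exp (-(4 * (A + log (2 / δ)))) ≤ δ := by
  have hL : exp (-(4 * log (2 / δ))) = (δ / 2) ^ 4 := by
    rw [show -(4 * log (2 / δ)) = ((4 : ℕ) : ℝ) * log (δ / 2) by
      rw [← inv_div, log_inv]; push_cast; ring, exp_nat_mul, exp_log (by positivity)]
  have hδ4 : δ ^ 4 ≤ δ := pow_le_of_le_one hδ.le hδ1.le (by norm_num)
  calc 8 * exp (-(4 * (A + log (2 / δ)))) ≤ 8 * exp (-(4 * log (2 / δ))) := by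
        gcongr; linarith
    _ = δ ^ 4 / 2 := by rw [hL]; ring
    _ ≤ δ := by linarith

lemma measure_compl_prod_prod_le {α β γ ε : Type*} [MeasurableSpace α] [MeasurableSpace β]
    [MeasurableSpace γ] [MeasurableSpace ε] {μ₁ : Measure α} {μ₂ : Measure β} {μ₃ : Measure γ}
    {μ₄ : Measure ε} [IsProbabilityMeasure μ₁] [IsProbabilityMeasure μ₂]
    [IsProbabilityMeasure μ₃] [IsProbabilityMeasure μ₄] {s₁ : Set α} {s₂ : Set β} {s₃ : Set γ}
    {s₄ : Set ε} {r : ℝ≥0∞} (h₁ : μ₁ s₁ᶜ ≤ r) (h₂ : μ₂ s₂ᶜ ≤ r) (h₃ : μ₃ s₃ᶜ ≤ r)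
    (h₄ : μ₄ s₄ᶜ ≤ r) :
    ((μ₁.prod μ₂).prod (μ₃.prod μ₄)) ((s₁ ×ˢ s₂) ×ˢ (s₃ ×ˢ s₄))ᶜ ≤ 4 * r :=
  calc _ ≤ (μ₁.prod μ₂) (s₁ ×ˢ s₂)ᶜ + (μ₃.prod μ₄) (s₃ ×ˢ s₄)ᶜ := Measure.prod_compl_prod_le _ _
    _ ≤ (μ₁ s₁ᶜ + μ₂ s₂ᶜ) + (μ₃ s₃ᶜ + μ₄ s₄ᶜ) :=
        add_le_add (Measure.prod_compl_prod_le _ _) (Measure.prod_compl_prod_le _ _)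
    _ ≤ (r + r) + (r + r) := by gcongr
    _ = 4 * r := by ring

theorem stmt11_general {Z : Type*} [MeasurableSpace Z] (H : Set (Z → ℝ))
    (hbin : ∀ h ∈ H, ∀ z, h z = 0 ∨ h z = 1)
    (hmeas : ∀ h ∈ H, Measurable h)
    (d m' : ℕ) (hm : 0 < m')
    (μS00 μS10 μS01 μS11 μT00 μT10 μT01 μT11 : Measure Z)
    [IsProbabilityMeasure μS00] [IsProbabilityMeasure μS10]
    [IsProbabilityMeasure μS01] [IsProbabilityMeasure μS11]
    [IsProbabilityMeasure μT00] [IsProbabilityMeasure μT10]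
    [IsProbabilityMeasure μT01] [IsProbabilityMeasure μT11]
    (f : Z → ℝ)
    (hfS00 : f =ᵐ[μS00] fun _ => 0) (hfS10 : f =ᵐ[μS10] fun _ => 0)
    (hfS01 : f =ᵐ[μS01] fun _ => 1) (hfS11 : f =ᵐ[μS11] fun _ => 1)
    (hfT00 : f =ᵐ[μT00] fun _ => 0) (hfT10 : f =ᵐ[μT10] fun _ => 0)
    (hfT01 : f =ᵐ[μT01] fun _ => 1) (hfT11 : f =ᵐ[μT11] fun _ => 1)
    -- ideal joint hypothesis `g*`
    (gs : Z → ℝ) (hgs : gs ∈ H)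
    (δ : ℝ) (hδ : 0 < δ) (hδ1 : δ < 1) :
    ENNReal.ofReal (1 - δ) ≤
      ((((Measure.pi fun _ : Fin m' => μT00).prod (Measure.pi fun _ : Fin m' => μS00)).prod
          ((Measure.pi fun _ : Fin m' => μT10).prod (Measure.pi fun _ : Fin m' => μS10))).prod
        (((Measure.pi fun _ : Fin m' => μT01).prod (Measure.pi fun _ : Fin m' => μS01)).prod
          ((Measure.pi fun _ : Fin m' => μT11).prod (Measure.pi fun _ : Fin m' => μS11))))
        {q : (((Fin m' → Z) × (Fin m' → Z)) × ((Fin m' → Z) × (Fin m' → Z))) ×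
              (((Fin m' → Z) × (Fin m' → Z)) × ((Fin m' → Z) × (Fin m' → Z))) |
          ∀ g ∈ H,
            eoDiff μT00 μT10 μT01 μT11 g ≤
              eoDiff μS00 μS10 μS01 μS11 g +
                (1 / 2) * (dHHemp H q.1.1.1 q.1.1.2 + dHHemp H q.1.2.1 q.1.2.2 +
                  dHHemp H q.2.1.1 q.2.1.2 + dHHemp H q.2.2.1 q.2.2.2) +
                16 * Real.sqrt ((2 * d * Real.log (2 * m') + Real.log (2 / δ)) / m') +
                ((errE μS00 gs f + errE μT00 gs f) + (errE μS10 gs f + errE μT10 gs f) +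
                  (errE μS01 gs f + errE μT01 gs f) + (errE μS11 gs f + errE μT11 gs f))} := by
  set A := 2 * d * log (2 * m')
  set t := 2 * √((A + log (2 / δ)) / m')
  have hm0 : (0 : ℝ) < m' := Nat.cast_pos.2 hm
  have hA : 0 ≤ A :=
    mul_nonneg (by positivity) (log_nonneg (by linarith [(Nat.one_le_cast (α := ℝ)).2 hm]))
  have hAL : 0 < A + log (2 / δ) := by
    have : 0 < log (2 / δ) := log_pos (by rw [lt_div_iff₀ hδ]; linarith)
    linarith
  have ht : 0 < t := by positivity
  have hmt : m' * t ^ 2 = 4 * (A + log (2 / δ)) := by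
    rw [mul_pow, sq_sqrt (by positivity)]
    field_simp
    ring
  have hbad := measure_compl_prod_prod_le
    (measure_compl_dHH_le_dHHemp_add_le hmeas μT00 μS00 hm ht)
    (measure_compl_dHH_le_dHHemp_add_le hmeas μT10 μS10 hm ht)
    (measure_compl_dHH_le_dHHemp_add_le hmeas μT01 μS01 hm ht)
    (measure_compl_dHH_le_dHHemp_add_le hmeas μT11 μS11 hm ht)
  refine (ofReal_one_sub_le_of_measure_compl_le hδ.le (hbad.trans ?_)).trans (measure_mono ?_)
  · rw [← ENNReal.ofReal_ofNat, ← ENNReal.ofReal_mul (by norm_num), hmt]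
    exact ENNReal.ofReal_le_ofReal (by linarith [eight_mul_exp_neg_le hA hδ hδ1])
  · rintro q ⟨⟨h00, h10⟩, h01, h11⟩ g hg
    have := eoDiff_le_eoDiff_add_dHH hbin hmeas hfS00 hfS10 hfS01 hfS11 hfT00 hfT10 hfT01 hfT11
      hgs hg
    simp only [Set.mem_ofPred_eq] at h00 h10 h01 h11
    linarith

theorem stmt11 {Z : Type*} [MeasurableSpace Z] (H : Set (Z → ℝ))
    (hbin : ∀ h ∈ H, ∀ z, h z = 0 ∨ h z = 1)
    (hmeas : ∀ h ∈ H, Measurable h)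
    (hsym : ∀ h ∈ H, (fun z => 1 - h z) ∈ H)
    (d m' : ℕ) (hm : 0 < m')
    (μS00 μS10 μS01 μS11 μT00 μT10 μT01 μT11 : Measure Z)
    [IsProbabilityMeasure μS00] [IsProbabilityMeasure μS10]
    [IsProbabilityMeasure μS01] [IsProbabilityMeasure μS11]
    [IsProbabilityMeasure μT00] [IsProbabilityMeasure μT10]
    [IsProbabilityMeasure μT01] [IsProbabilityMeasure μT11]
    (f : Z → ℝ)
    (hfS00 : f =ᵐ[μS00] fun _ => 0) (hfS10 : f =ᵐ[μS10] fun _ => 0)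
    (hfS01 : f =ᵐ[μS01] fun _ => 1) (hfS11 : f =ᵐ[μS11] fun _ => 1)
    (hfT00 : f =ᵐ[μT00] fun _ => 0) (hfT10 : f =ᵐ[μT10] fun _ => 0)
    (hfT01 : f =ᵐ[μT01] fun _ => 1) (hfT11 : f =ᵐ[μT11] fun _ => 1)
    -- ideal joint hypothesis `g*`
    (gs : Z → ℝ) (hgs : gs ∈ H)
    (δ : ℝ) (hδ : 0 < δ) (hδ1 : δ < 1)
    -- empirical divergence estimation lemma
    (hEmp : ∀ (ν ν' : Measure Z) [IsProbabilityMeasure ν] [IsProbabilityMeasure ν'],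
      ∀ δ' : ℝ, 0 < δ' →
      ENNReal.ofReal (1 - δ') ≤
        ((Measure.pi fun _ : Fin m' => ν).prod (Measure.pi fun _ : Fin m' => ν'))
          {p : (Fin m' → Z) × (Fin m' → Z) |
            dHH H ν ν' ≤ dHHemp H p.1 p.2 +
              8 * Real.sqrt ((2 * d * Real.log (2 * m') + Real.log (2 / δ')) / m')}) :
    ENNReal.ofReal (1 - δ) ≤
      ((((Measure.pi fun _ : Fin m' => μT00).prod (Measure.pi fun _ : Fin m' => μS00)).prod
          ((Measure.pi fun _ : Fin m' => μT10).prod (Measure.pi fun _ : Fin m' => μS10))).prod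
        (((Measure.pi fun _ : Fin m' => μT01).prod (Measure.pi fun _ : Fin m' => μS01)).prod
          ((Measure.pi fun _ : Fin m' => μT11).prod (Measure.pi fun _ : Fin m' => μS11))))
        {q : (((Fin m' → Z) × (Fin m' → Z)) × ((Fin m' → Z) × (Fin m' → Z))) ×
              (((Fin m' → Z) × (Fin m' → Z)) × ((Fin m' → Z) × (Fin m' → Z))) |
          ∀ g ∈ H,
            eoDiff μT00 μT10 μT01 μT11 g ≤
              eoDiff μS00 μS10 μS01 μS11 g +
                (1 / 2) * (dHHemp H q.1.1.1 q.1.1.2 + dHHemp H q.1.2.1 q.1.2.2 +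
                  dHHemp H q.2.1.1 q.2.1.2 + dHHemp H q.2.2.1 q.2.2.2) +
                16 * Real.sqrt ((2 * d * Real.log (2 * m') + Real.log (2 / δ)) / m') +
                ((errE μS00 gs f + errE μT00 gs f) + (errE μS10 gs f + errE μT10 gs f) +
                  (errE μS01 gs f + errE μT01 gs f) + (errE μS11 gs f + errE μT11 gs f))} :=
  stmt11_general H hbin hmeas d m' hm μS00 μS10 μS01 μS11 μT00 μT10 μT01 μT11 f hfS00 hfS10 hfS01
    hfS11 hfT00 hfT10 hfT01 hfT11 gs hgs δ hδ hδ1
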